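/- Let f be a real-valued EO signature of arity 2n ≥ 4 that does not satisfy ARS. Then there exist distinct indices i,j such that f^{x_i≠x_j} = f_{ij}^{01} + f_{ij}^{10} is a nonzero EO signature of arity 2n−2 that does not satisfy ARS. -/

import Mathlib

open Finset

/-- Hamming weight of a Boolean vector. -/
def wtB {ι : Type*} [Fintype ι] (a : ι → Bool) : ℕ :=
  (Finset.univ.filter fun i => a i = true).card

/-- Componentwise XOR of three Boolean vectors. -/
def xor3 {ι : Type*} (a b c : ι → Bool) : ι → Bool :=
  fun i => Bool.xor (a i) (Bool.xor (b i) (c i))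

/-- A (support of a) signature is affine if it is nonempty and closed under α⊕β⊕γ. -/
def AffineS {ι : Type*} [Fintype ι] [DecidableEq ι] (S : Finset (ι → Bool)) : Prop :=
  S.Nonempty ∧ ∀ a ∈ S, ∀ b ∈ S, ∀ c ∈ S, xor3 a b c ∈ S

/-- Componentwise complement. -/
def cmpl {ι : Type*} (a : ι → Bool) : ι → Bool := fun i => !(a i)

/-- A real-valued EO signature vanishes on all vectors whose weight is not half the arity. -/
def IsEOR {ι : Type*} [Fintype ι] (f : (ι → Bool) → ℝ) : Prop :=
  ∀ a, 2 * wtB a ≠ Fintype.card ι → f a = 0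

/-- Arrow reversal symmetry. -/
def ARS {ι : Type*} (f : (ι → Bool) → ℝ) : Prop := ∀ a, f a = f (cmpl a)

/-- Minus arrow reversal symmetry. -/
def NegARS {ι : Type*} (f : (ι → Bool) → ℝ) : Prop := ∀ a, f a = - f (cmpl a)

/-- Extend an assignment on the variables other than `i, j` by `x_i = a`, `x_j = b`. -/
def extIJ {N : ℕ} (i j : Fin N) (a b : Bool)
    (β : {l : Fin N // l ≠ i ∧ l ≠ j} → Bool) : Fin N → Bool :=
  fun l => if h1 : l = i then a else if h2 : l = j then b else β ⟨l, h1, h2⟩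

/-- `f^{x_i ≠ x_j} = f_{ij}^{01} + f_{ij}^{10}`. -/
def neqP {N : ℕ} (f : (Fin N → Bool) → ℝ) (i j : Fin N) :
    ({l : Fin N // l ≠ i ∧ l ≠ j} → Bool) → ℝ :=
  fun β => f (extIJ i j false true β) + f (extIJ i j true false β)

/-- `f^{x_i ≠⁻ x_j} = f_{ij}^{01} - f_{ij}^{10}`. -/
def neqM {N : ℕ} (f : (Fin N → Bool) → ℝ) (i j : Fin N) :
    ({l : Fin N // l ≠ i ∧ l ≠ j} → Bool) → ℝ :=
  fun β => f (extIJ i j false true β) - f (extIJ i j true false β)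

/-!
Let `g α = f α - f ᾱ`. Pinning commutes with complementation, so `g^{x_i ≠ x_j}` is the ARS
defect of `f^{x_i ≠ x_j}`; it suffices to find `i ≠ j` with `g^{x_i ≠ x_j} ≠ 0`, the EO property
and nonvanishing of `f^{x_i ≠ x_j}` being automatic. If all of them vanished, `g` would change
sign under every transposition of a `0`-entry and a `1`-entry of its argument. Take `α` of weight
`n` with `g α ≠ 0`, zeros `i₁ ≠ i₂` and a one `j` (possible as `n ≥ 2`): the vectors `α`,
`α ∘ (i₁ j)`, `α ∘ (i₂ j)` are pairwise related by such transpositions, an odd cycle, so `g α = 0`.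
-/

section Weight

variable {ι : Type*} [Fintype ι]

lemma wtB_le_card (α : ι → Bool) : wtB α ≤ Fintype.card ι :=
  card_filter_le _ _

lemma wtB_eq_sum (α : ι → Bool) : wtB α = ∑ l, (α l).toNat := by
  simp only [wtB, card_filter]
  exact Fintype.sum_congr _ _ fun l => by cases α l <;> rfl

lemma wtB_cmpl [DecidableEq ι] (α : ι → Bool) : wtB (cmpl α) = Fintype.card ι - wtB α := by
  have hfilter : (univ.filter fun l => cmpl α l = true) =
      univ \ univ.filter fun l => α l = true := by
    ext l; simp [cmpl]
  rw [wtB, hfilter, card_sdiff_of_subset (filter_subset _ _), card_univ, wtB]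

lemma exists_pair_false_of_wtB_add_two_le [DecidableEq ι] {α : ι → Bool}
    (h : wtB α + 2 ≤ Fintype.card ι) : ∃ i₁ i₂, i₁ ≠ i₂ ∧ α i₁ = false ∧ α i₂ = false := by
  have hcard : 1 < wtB (cmpl α) := by rw [wtB_cmpl]; omega
  obtain ⟨i₁, hi₁, i₂, hi₂, hne⟩ := one_lt_card.mp hcard
  simp only [mem_filter, mem_univ, true_and, cmpl, Bool.not_eq_true'] at hi₁ hi₂
  exact ⟨i₁, i₂, hne, hi₁, hi₂⟩

lemma exists_true_of_wtB_pos {α : ι → Bool} (h : 0 < wtB α) : ∃ j, α j = true := by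
  obtain ⟨j, hj⟩ := card_pos.mp h
  exact ⟨j, (mem_filter.mp hj).2⟩

end Weight

section Pinning

variable {N : ℕ} {i j : Fin N} {a b : Bool} {β : {l : Fin N // l ≠ i ∧ l ≠ j} → Bool}

@[simp] lemma extIJ_apply_left : extIJ i j a b β i = a := by
  simp [extIJ]

lemma extIJ_apply_right (hij : i ≠ j) : extIJ i j a b β j = b := by
  simp [extIJ, hij.symm]

lemma extIJ_apply_of_ne {l : Fin N} (hi : l ≠ i) (hj : l ≠ j) :
    extIJ i j a b β l = β ⟨l, hi, hj⟩ := by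
  simp [extIJ, hi, hj]

lemma cmpl_extIJ : cmpl (extIJ i j a b β) = extIJ i j (!a) (!b) (cmpl β) := by
  funext l
  by_cases hi : l = i
  · subst hi; simp [cmpl]
  by_cases hj : l = j
  · subst hj; simp [cmpl, extIJ, hi]
  · simp [cmpl, extIJ_apply_of_ne hi hj]

lemma extIJ_restrict {α : Fin N → Bool} (hij : i ≠ j) :
    extIJ i j (α i) (α j) (fun l => α l.1) = α := by
  funext l
  by_cases hi : l = i
  · subst hi; simp
  by_cases hj : l = j
  · subst hj; rw [extIJ_apply_right hij]
  · rw [extIJ_apply_of_ne hi hj]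

lemma extIJ_restrict_swap {α : Fin N → Bool} (hij : i ≠ j) :
    extIJ i j (α j) (α i) (fun l => α l.1) = α ∘ Equiv.swap i j := by
  funext l
  by_cases hi : l = i
  · subst hi; simp
  by_cases hj : l = j
  · subst hj; simp [extIJ_apply_right hij]
  · simp [extIJ_apply_of_ne hi hj, Equiv.swap_apply_of_ne_of_ne hi hj]

lemma card_subtype_ne_and_ne (hij : i ≠ j) :
    Fintype.card {l : Fin N // l ≠ i ∧ l ≠ j} + 2 = N := by
  have hfilter : (univ.filter fun l : Fin N => l ≠ i ∧ l ≠ j) = univ \ {i, j} := by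
    ext l; simp [not_or]
  have hpair := card_le_univ ({i, j} : Finset (Fin N))
  rw [card_pair hij, Fintype.card_fin] at hpair
  rw [Fintype.card_subtype, hfilter, card_sdiff_of_subset (subset_univ _), card_pair hij,
    card_univ, Fintype.card_fin]
  omega

lemma wtB_extIJ (hij : i ≠ j) : wtB (extIJ i j a b β) = wtB β + a.toNat + b.toNat := by
  have hpair : ∑ l : {l : Fin N // ¬(l ≠ i ∧ l ≠ j)}, (extIJ i j a b β l).toNat =
      a.toNat + b.toNat := by
    rw [← Finset.sum_subtype {i, j} (by simp; tauto) fun l => (extIJ i j a b β l).toNat,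
      sum_pair hij, extIJ_apply_left, extIJ_apply_right hij]
  rw [wtB_eq_sum, wtB_eq_sum, ← Fintype.sum_subtype_add_sum_subtype (fun l => l ≠ i ∧ l ≠ j),
    hpair, add_assoc]
  congr 1
  exact Fintype.sum_congr _ _ fun l => by rw [extIJ_apply_of_ne l.2.1 l.2.2]

end Pinning

def arsDefect {ι : Type*} (f : (ι → Bool) → ℝ) (α : ι → Bool) : ℝ := f α - f (cmpl α)

lemma not_ARS_iff_exists_arsDefect_ne_zero {ι : Type*} {f : (ι → Bool) → ℝ} :
    ¬ ARS f ↔ ∃ α, arsDefect f α ≠ 0 := by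
  simp [ARS, arsDefect, sub_eq_zero]

lemma exists_ne_zero_of_not_ARS {ι : Type*} {f : (ι → Bool) → ℝ} (hf : ¬ ARS f) :
    ∃ α, f α ≠ 0 := by
  by_contra! h
  exact hf fun α => by rw [h, h]

lemma IsEOR.arsDefect {ι : Type*} [Fintype ι] [DecidableEq ι] {f : (ι → Bool) → ℝ}
    (hf : IsEOR f) : IsEOR (arsDefect f) := by
  intro α hα
  have hcmpl : 2 * wtB (cmpl α) ≠ Fintype.card ι := by
    have := wtB_le_card α
    rw [wtB_cmpl]; omega
  simp [_root_.arsDefect, hf α hα, hf _ hcmpl]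

lemma IsEOR.neqP {N : ℕ} {f : (Fin N → Bool) → ℝ} (hf : IsEOR f) {i j : Fin N} (hij : i ≠ j) :
    IsEOR (neqP f i j) := by
  intro β hβ
  have hcard := card_subtype_ne_and_ne hij
  have hft := hf (extIJ i j false true β) (by rw [wtB_extIJ hij, Fintype.card_fin]; simp; omega)
  have htf := hf (extIJ i j true false β) (by rw [wtB_extIJ hij, Fintype.card_fin]; simp; omega)
  simp [_root_.neqP, hft, htf]

lemma arsDefect_neqP {N : ℕ} (f : (Fin N → Bool) → ℝ) (i j : Fin N) :
    arsDefect (neqP f i j) = neqP (arsDefect f) i j := by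
  funext β
  simp only [arsDefect, neqP, cmpl_extIJ, Bool.not_false, Bool.not_true]
  ring

lemma neqP_restrict {N : ℕ} (g : (Fin N → Bool) → ℝ) {i j : Fin N} (hij : i ≠ j)
    {α : Fin N → Bool} (hi : α i = false) (hj : α j = true) :
    neqP g i j (fun l => α l.1) = g α + g (α ∘ Equiv.swap i j) := by
  rw [neqP, ← hi, ← hj, extIJ_restrict hij, hi, hj, ← extIJ_restrict_swap hij, hi, hj]

lemma eq_zero_of_neqP_eq_zero {N : ℕ} {g : (Fin N → Bool) → ℝ}
    (hg : ∀ i j, i ≠ j → ∀ β, neqP g i j β = 0) {α : Fin N → Bool} {i₁ i₂ j : Fin N}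
    (h₁₂ : i₁ ≠ i₂) (hi₁ : α i₁ = false) (hi₂ : α i₂ = false) (hj : α j = true) : g α = 0 := by
  have h₁j : i₁ ≠ j := by rintro rfl; simp_all
  have h₂j : i₂ ≠ j := by rintro rfl; simp_all
  set α₁ := α ∘ Equiv.swap i₁ j
  set α₂ := α ∘ Equiv.swap i₂ j
  have hswap : α₁ ∘ Equiv.swap i₂ i₁ = α₂ := by
    funext l
    simp only [α₁, α₂, Function.comp_apply, Equiv.swap_apply_def]
    split_ifs <;> simp_all
  have e₁ := neqP_restrict g h₁j hi₁ hj
  have e₂ := neqP_restrict g h₂j hi₂ hj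
  have e₃ := neqP_restrict g h₁₂.symm (α := α₁)
    (by simp [α₁, Equiv.swap_apply_of_ne_of_ne h₁₂.symm h₂j, hi₂]) (by simp [α₁, hj])
  rw [hswap] at e₃
  linarith [hg _ _ h₁j (fun l => α l.1), hg _ _ h₂j (fun l => α l.1),
    hg _ _ h₁₂.symm (fun l => α₁ l.1)]

theorem stmt19_general {n : ℕ} (hn : 2 ≤ n) (f : (Fin (2 * n) → Bool) → ℝ)
    (hEO : IsEOR f) (hnARS : ¬ ARS f) :
    ∃ i j : Fin (2 * n), i ≠ j ∧ (∃ β, neqP f i j β ≠ 0) ∧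
      IsEOR (neqP f i j) ∧ ¬ ARS (neqP f i j) := by
  obtain ⟨α, hα⟩ := not_ARS_iff_exists_arsDefect_ne_zero.mp hnARS
  have hwt : 2 * wtB α = 2 * n := by
    by_contra hwt
    exact hα (hEO.arsDefect α (by rwa [Fintype.card_fin]))
  obtain ⟨i₁, i₂, h₁₂, hi₁, hi₂⟩ :=
    exists_pair_false_of_wtB_add_two_le (α := α) (by rw [Fintype.card_fin]; omega)
  obtain ⟨k, hk⟩ := exists_true_of_wtB_pos (α := α) (by omega)
  obtain ⟨i, j, hij, β, hβ⟩ : ∃ i j : Fin (2 * n), i ≠ j ∧ ∃ β, neqP (arsDefect f) i j β ≠ 0 := by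
    by_contra! h
    exact hα (eq_zero_of_neqP_eq_zero h h₁₂ hi₁ hi₂ hk)
  have hnot : ¬ ARS (neqP f i j) :=
    not_ARS_iff_exists_arsDefect_ne_zero.mpr ⟨β, by rwa [arsDefect_neqP]⟩
  exact ⟨i, j, hij, exists_ne_zero_of_not_ARS hnot, hEO.neqP hij, hnot⟩

theorem stmt19 {n : ℕ} (hn : 2 ≤ n) (f : (Fin (2 * n) → Bool) → ℝ)
    (hEO : IsEOR f) (hnz : ∃ a, f a ≠ 0) (hnARS : ¬ ARS f) :
    ∃ i j : Fin (2 * n), i ≠ j ∧ (∃ β, neqP f i j β ≠ 0) ∧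
      IsEOR (neqP f i j) ∧ ¬ ARS (neqP f i j) :=
  stmt19_general hn f hEO hnARS
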